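/- For every p ∈ [1/2, 1) and every η > 0, the standard normal cumulative distribution function satisfies Φ( Φ⁻¹(p) + η ) ≥ 1 − (1 − p) · √(π/2) · e^{−η²/2}. -/

import Mathlib

/-! For `x, c ≥ 0` we have `(x + c)² ≥ x² + c²`, so the standard normal density satisfies
`φ (x + c) ≤ e^{-c²/2} φ x`; integrating over `(x, ∞)` gives the tail bound
`1 - Φ (x + c) ≤ e^{-c²/2} (1 - Φ x)`. For `p ≥ 1/2` the point `x = Φ⁻¹ p` is nonnegative
with `1 - Φ x = 1 - p`, and the factor `√(π/2) ≥ 1` only weakens the resulting bound. -/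

open MeasureTheory Metric Finset
open scoped ComplexOrder

noncomputable section

/-- Standard normal cumulative distribution function. -/
def stdPhi (x : ℝ) : ℝ := ∫ u in Set.Iic x, Real.exp (-u ^ 2 / 2) / Real.sqrt (2 * Real.pi)

open Classical in
/-- Inverse of the standard normal CDF (defined via choice; on `(0,1)` it is the
genuine inverse since `stdPhi` is a strictly monotone bijection onto `(0,1)`). -/
def stdPhiInv (p : ℝ) : ℝ := if h : ∃ x, stdPhi x = p then h.choose else 0

open ProbabilityTheory Set Filter Topology

lemma integral_Ioi_comp_add_right {E : Type*} [NormedAddCommGroup E] [NormedSpace ℝ E]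
    (f : ℝ → E) (a c : ℝ) : ∫ x in Ioi a, f (x + c) = ∫ x in Ioi (a + c), f x := by
  rw [← (measurePreserving_add_right volume c).setIntegral_preimage_emb
    (measurableEmbedding_addRight c) f (Ioi (a + c))]
  simp

local notation "φ" => gaussianPDFReal 0 1

lemma gaussianPDFReal_zero_one_neg (x : ℝ) : φ (-x) = φ x := by
  simp [gaussianPDFReal]

lemma gaussianPDFReal_zero_one_add_le {x c : ℝ} (hx : 0 ≤ x) (hc : 0 ≤ c) :
    φ (x + c) ≤ Real.exp (-c ^ 2 / 2) * φ x := by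
  simp only [gaussianPDFReal, sub_zero, NNReal.coe_one, mul_one]
  rw [mul_left_comm, ← Real.exp_add]
  gcongr
  nlinarith [mul_nonneg hx hc]

lemma stdPhi_eq_integral_gaussianPDFReal (x : ℝ) : stdPhi x = ∫ u in Iic x, φ u := by
  simp [stdPhi, gaussianPDFReal, div_eq_inv_mul]

lemma integral_Ioi_gaussianPDFReal (x : ℝ) : ∫ u in Ioi x, φ u = 1 - stdPhi x := by
  have hφ := integrable_gaussianPDFReal 0 1
  rw [stdPhi_eq_integral_gaussianPDFReal, ← integral_gaussianPDFReal_eq_one 0 one_ne_zero,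
    ← intervalIntegral.integral_Iic_add_Ioi hφ.integrableOn hφ.integrableOn]
  ring

lemma stdPhi_sub_stdPhi (a b : ℝ) : stdPhi b - stdPhi a = ∫ u in a..b, φ u := by
  have hφ := integrable_gaussianPDFReal 0 1
  simp only [stdPhi_eq_integral_gaussianPDFReal]
  exact intervalIntegral.integral_Iic_sub_Iic hφ.integrableOn hφ.integrableOn

lemma stdPhi_strictMono : StrictMono stdPhi := fun a b hab => by
  have := intervalIntegral.intervalIntegral_pos_of_pos_on
    (integrable_gaussianPDFReal 0 1).intervalIntegrable
    (fun u _ => gaussianPDFReal_pos 0 1 u one_ne_zero) hab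
  linarith [stdPhi_sub_stdPhi a b]

lemma stdPhi_continuous : Continuous stdPhi := by
  have h := ((integrable_gaussianPDFReal 0 1).continuous_primitive 0).const_add (stdPhi 0)
  refine h.congr fun b => ?_
  linarith [stdPhi_sub_stdPhi 0 b]

lemma stdPhi_neg (x : ℝ) : stdPhi (-x) = 1 - stdPhi x := by
  rw [← integral_Ioi_gaussianPDFReal, stdPhi_eq_integral_gaussianPDFReal, ← neg_neg x,
    ← integral_comp_neg_Iic]
  simp [gaussianPDFReal_zero_one_neg]

lemma stdPhi_zero : stdPhi 0 = 1 / 2 := by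
  linarith [neg_zero (G := ℝ) ▸ stdPhi_neg 0]

lemma tendsto_stdPhi_atTop : Tendsto stdPhi atTop (𝓝 1) := by
  have h := (intervalIntegral_tendsto_integral_Ioi 0 (integrable_gaussianPDFReal 0 1).integrableOn
    tendsto_id).const_add (stdPhi 0)
  rw [integral_Ioi_gaussianPDFReal, add_sub_cancel] at h
  exact h.congr fun b => by simp only [id]; linarith [stdPhi_sub_stdPhi 0 b]

lemma tendsto_stdPhi_atBot : Tendsto stdPhi atBot (𝓝 0) := by
  have h := (tendsto_stdPhi_atTop.comp tendsto_neg_atBot_atTop).const_sub 1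
  rw [sub_self] at h
  exact h.congr fun x => by simp [stdPhi_neg]

lemma stdPhi_stdPhiInv {p : ℝ} (hp : p ∈ Set.Ioo 0 1) : stdPhi (stdPhiInv p) = p := by
  have hex : ∃ x, stdPhi x = p := by
    obtain ⟨a, ha⟩ := (tendsto_stdPhi_atBot.eventually (eventually_lt_nhds hp.1)).exists
    obtain ⟨b, hb⟩ := (tendsto_stdPhi_atTop.eventually (eventually_gt_nhds hp.2)).exists
    exact intermediate_value_univ a b stdPhi_continuous ⟨ha.le, hb.le⟩
  rw [stdPhiInv, dif_pos hex]
  exact hex.choose_spec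

lemma one_sub_stdPhi_add_le {x c : ℝ} (hx : 0 ≤ x) (hc : 0 ≤ c) :
    1 - stdPhi (x + c) ≤ Real.exp (-c ^ 2 / 2) * (1 - stdPhi x) := by
  rw [← integral_Ioi_gaussianPDFReal, ← integral_Ioi_gaussianPDFReal, ← integral_const_mul,
    ← integral_Ioi_comp_add_right]
  have hφ := integrable_gaussianPDFReal 0 1
  refine setIntegral_mono_on (hφ.comp_add_right c).integrableOn (hφ.const_mul _).integrableOn
    measurableSet_Ioi fun u hu => ?_
  exact gaussianPDFReal_zero_one_add_le (hx.trans hu.le) hc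

/-- Gaussian CDF tail estimate `Φ(Φ⁻¹(p) + η) ≥ 1 - (1-p)√(π/2)e^{-η²/2}`. -/
theorem stmt11 (p η : ℝ) (hp : p ∈ Set.Ico (1/2 : ℝ) 1) (hη : 0 < η) :
    1 - (1 - p) * Real.sqrt (Real.pi / 2) * Real.exp (-η ^ 2 / 2)
      ≤ stdPhi (stdPhiInv p + η) := by
  have hinv : stdPhi (stdPhiInv p) = p := stdPhi_stdPhiInv ⟨by linarith [hp.1], hp.2⟩
  have hinv_nonneg : 0 ≤ stdPhiInv p :=
    stdPhi_strictMono.le_iff_le.1 (by rw [hinv, stdPhi_zero]; exact hp.1)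
  have htail := one_sub_stdPhi_add_le hinv_nonneg hη.le
  have hsqrt : 1 ≤ Real.sqrt (Real.pi / 2) :=
    Real.one_le_sqrt.2 (by linarith [Real.pi_gt_three])
  rw [hinv] at htail
  have hweight : 0 ≤ (1 - p) * Real.exp (-η ^ 2 / 2) :=
    mul_nonneg (by linarith [hp.2]) (Real.exp_pos _).le
  calc 1 - (1 - p) * Real.sqrt (Real.pi / 2) * Real.exp (-η ^ 2 / 2)
      ≤ 1 - Real.exp (-η ^ 2 / 2) * (1 - p) := by
        nlinarith [mul_le_mul_of_nonneg_left hsqrt hweight]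
    _ ≤ stdPhi (stdPhiInv p + η) := by linarith

end
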